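/- In any MLL proof net Θ, if L is a ⅋-link with premises A and B, then the empires e_Θ(A) and e_Θ(B) are equal. -/

import Mathlib

/-- An MLL link: an ID-link (axiom link) with two conclusions,
a tensor link or a par link with two premises and one conclusion. -/
inductive MLLLink (V : Type) where
  | idl (c₁ c₂ : V)
  | tensor (a b c : V)
  | par (a b c : V)
deriving DecidableEq

namespace MLLLink
variable {V V' : Type}

def prems : MLLLink V → List V
  | idl _ _ => []
  | tensor a b _ => [a, b]
  | par a b _ => [a, b]

def concls : MLLLink V → List V
  | idl c₁ c₂ => [c₁, c₂]
  | tensor _ _ c => [c]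
  | par _ _ c => [c]

def isId : MLLLink V → Bool
  | idl _ _ => true
  | _ => false

def isTensor : MLLLink V → Bool
  | tensor _ _ _ => true
  | _ => false

def isPar : MLLLink V → Bool
  | par _ _ _ => true
  | _ => false

/-- Relabel the vertices of a link along a map. -/
def map (f : V → V') : MLLLink V → MLLLink V'
  | idl c₁ c₂ => idl (f c₁) (f c₂)
  | tensor a b c => tensor (f a) (f b) (f c)
  | par a b c => par (f a) (f b) (f c)

/-- Forget whether a multiplicative link is ⊗ or ⅋ (normalizing ⅋ to ⊗). -/
def forget : MLLLink V → MLLLink V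
  | par a b c => tensor a b c
  | L => L

end MLLLink

/-- An MLL proof structure on the set `V` of formula occurrences:
every occurrence is the conclusion of exactly one link and the premise of
at most one link, and the occurrences appearing in a link are distinct. -/
structure MLLProofStructure (V : Type) [DecidableEq V] where
  links : Finset (MLLLink V)
  concl_exists : ∀ v : V, ∃ L ∈ links, v ∈ L.concls
  concl_unique : ∀ v : V, ∀ L ∈ links, ∀ L' ∈ links,
      v ∈ L.concls → v ∈ L'.concls → L = L'
  prem_unique : ∀ v : V, ∀ L ∈ links, ∀ L' ∈ links,
      v ∈ L.prems → v ∈ L'.prems → L = L'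
  nodup : ∀ L ∈ links, (L.prems ++ L.concls).Nodup

variable {V : Type} [DecidableEq V]

/-- The edge generated by a link under a DR-switching `S`
(`S L = true` selects the left premise of a ⅋-link). -/
def switchEdge (S : MLLLink V → Bool) (L : MLLLink V) (v w : V) : Prop :=
  match L with
  | .idl c₁ c₂ => v = c₁ ∧ w = c₂
  | .tensor a b c => (v = a ∧ w = c) ∨ (v = b ∧ w = c)
  | .par a b c =>
      (S (.par a b c) = true ∧ v = a ∧ w = c) ∨
      (S (.par a b c) = false ∧ v = b ∧ w = c)

def drRel (Θ : MLLProofStructure V) (S : MLLLink V → Bool) (v w : V) : Prop :=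
  ∃ L ∈ Θ.links, switchEdge S L v w

/-- The Danos–Regnier graph of a proof structure under a switching. -/
def drGraph (Θ : MLLProofStructure V) (S : MLLLink V → Bool) : SimpleGraph V :=
  SimpleGraph.fromRel (drRel Θ S)

/-- Danos–Regnier criterion: a proof net is a proof structure all of whose
DR-graphs are acyclic and connected. -/
def IsProofNet (Θ : MLLProofStructure V) : Prop :=
  ∀ S : MLLLink V → Bool, (drGraph Θ S).IsAcyclic ∧ (drGraph Θ S).Connected

/-- The edges from `A` down to the conclusion of the link of which `A` is a premise. -/
def belowEdges (Θ : MLLProofStructure V) (A : V) : Set (Sym2 V) :=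
  {e | ∃ L ∈ Θ.links, A ∈ L.prems ∧ ∃ c ∈ L.concls, e = s(A, c)}

/-- The DR-graph with the edge below `A` deleted. -/
def empGraph (Θ : MLLProofStructure V) (S : MLLLink V → Bool) (A : V) : SimpleGraph V :=
  (drGraph Θ S).deleteEdges (belowEdges Θ A)

/-- The vertex set of `Θ_S^A`: the connected component of `A` in the DR-graph
after deleting the edge below `A`. -/
def empComp (Θ : MLLProofStructure V) (S : MLLLink V → Bool) (A : V) : Set V :=
  {v | (empGraph Θ S A).Reachable A v}

/-- The empire of `A` in `Θ`. -/
def empire (Θ : MLLProofStructure V) (A : V) : Set V :=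
  ⋂ S : MLLLink V → Bool, empComp Θ S A

/-- A conclusion of `Θ` is a formula occurrence which is a premise of no link. -/
def IsConclusion (Θ : MLLProofStructure V) (v : V) : Prop :=
  ∀ L ∈ Θ.links, v ∉ L.prems

/-- All premises and conclusions of a link lie in `X`. -/
def allIn (X : Set V) (L : MLLLink V) : Prop :=
  (∀ w ∈ L.prems, w ∈ X) ∧ (∀ w ∈ L.concls, w ∈ X)

/-- `X` together with the links of `Θ` contained in `X` forms a proof structure. -/
def IsSubProofStructure (Θ : MLLProofStructure V) (X : Set V) : Prop :=
  ∀ v ∈ X, ∃ L ∈ Θ.links, v ∈ L.concls ∧ allIn X L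

def subDrRel (Θ : MLLProofStructure V) (X : Set V) (S : MLLLink V → Bool)
    (v w : V) : Prop :=
  ∃ L ∈ Θ.links, allIn X L ∧ switchEdge S L v w

/-- The DR-graph of the substructure of `Θ` induced on `X`. -/
def subDrGraph (Θ : MLLProofStructure V) (X : Set V) (S : MLLLink V → Bool) :
    SimpleGraph V :=
  SimpleGraph.fromRel (subDrRel Θ X S)

/-- `X` is a sub-proof net of `Θ`: it induces a proof structure whose
DR-graphs are all acyclic and connected (on `X`). -/
def IsSubProofNet (Θ : MLLProofStructure V) (X : Set V) : Prop :=
  IsSubProofStructure Θ X ∧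
    ∀ S : MLLLink V → Bool, (subDrGraph Θ X S).IsAcyclic ∧
      ∀ v ∈ X, ∀ w ∈ X, (subDrGraph Θ X S).Reachable v w

/-- `A` is a conclusion of the substructure induced on `X`. -/
def IsConclusionOfSub (Θ : MLLProofStructure V) (X : Set V) (A : V) : Prop :=
  A ∈ X ∧ ∀ L ∈ Θ.links, allIn X L → A ∉ L.prems

/-- `e` is an isomorphism of the underlying link graphs of `Θ₁` and `Θ₂`,
forgetting the ⊗/⅋ labels: they witness that `Θ₁` and `Θ₂` are in the same PS-family. -/
def FamilyIso {V₁ V₂ : Type} [DecidableEq V₁] [DecidableEq V₂]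
    (Θ₁ : MLLProofStructure V₁) (Θ₂ : MLLProofStructure V₂) (e : V₁ ≃ V₂) : Prop :=
  Θ₁.links.image (fun L => (L.map e).forget) = Θ₂.links.image MLLLink.forget

/-- The number of (multiplicative) links at which the ⊗/⅋-labellings of
`Θ₁` and `Θ₂` differ along `e`. -/
def diffCount {V₁ V₂ : Type} [DecidableEq V₁] [DecidableEq V₂]
    (Θ₁ : MLLProofStructure V₁) (Θ₂ : MLLProofStructure V₂) (e : V₁ ≃ V₂) : ℕ :=
  (Θ₁.links.filter (fun L => L.map e ∉ Θ₂.links)).card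

/-!
Fix a switching away from the ⅋-link `L = ⅋(A, B, C)` and let `G` be the DR-graph of the other
links, so that the two choices at `L` give the trees `G + AC` and `G + BC`. The edge `AC` is not
in `G`: otherwise `G` would be connected and the acyclicity of `G + BC` would force `BC ∈ G` as
well, whereas `C`, the premise of at most one link, has at most one neighbour in `G`. Hence
deleting the edge below `A` leaves `G` when `A` is chosen and the whole, connected, DR-graph when
`B` is chosen, so the empire of `A` is the intersection over switchings of the component of `A`
in `G`; likewise for `B`. These components agree: `AC` is a bridge of `G + AC` while `G + BC` is
connected, so `B` lies on the side of `A`.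
-/

namespace SimpleGraph

variable {W : Type*} {G : SimpleGraph W}

theorem Reachable.of_sup_edge {u v x y : W} (h : (G ⊔ edge u v).Reachable x y)
    (hu : ¬G.Reachable x u) (hv : ¬G.Reachable x v) : G.Reachable x y := by
  by_contra hy
  obtain ⟨p⟩ := h
  obtain ⟨d, -, hd, hd'⟩ := p.exists_boundary_dart {z | G.Reachable x z} Reachable.rfl hy
  rcases d.adj with hG | hE
  · exact hd' (hd.trans hG.reachable)
  · obtain ⟨⟨hdu, -⟩ | ⟨hdv, -⟩, -⟩ := (edge_adj ..).mp hE
    · exact hu (hdu ▸ hd)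
    · exact hv (hdv ▸ hd)

theorem deleteEdges_sup_edge_self {a c : W} (h : ¬G.Adj a c) :
    (G ⊔ edge a c).deleteEdges {s(a, c)} = G := by
  simp [h]

theorem deleteEdges_sup_edge_of_ne {a b c : W} (h : ¬G.Adj a c) (hab : a ≠ b) :
    (G ⊔ edge b c).deleteEdges {s(a, c)} = G ⊔ edge b c :=
  deleteEdges_eq_self.mpr <| by simp +contextual [h, hab]

theorem not_adj_of_isAcyclic_sup_edge {a b c : W} (hb : (G ⊔ edge b c).IsAcyclic)
    (ha : (G ⊔ edge a c).Connected) (hc : ∀ x y, G.Adj x c → G.Adj y c → x = y)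
    (hab : a ≠ b) (hbc : b ≠ c) : ¬G.Adj a c := by
  intro hac
  rw [sup_edge_of_adj G hac] at ha
  have hbc' := (isAcyclic_sup_fromEdgeSet_iff.mp hb).2 (ha.preconnected b c)
  exact hab (hc a b hac (hbc'.resolve_left hbc))

theorem reachable_of_isAcyclic_sup_edge {a b c : W} (ha : (G ⊔ edge a c).IsAcyclic)
    (hb : (G ⊔ edge b c).Connected) (hac : ¬G.Adj a c) (hac' : a ≠ c) : G.Reachable a b := by
  have hnac : ¬G.Reachable a c := fun h =>
    ((isAcyclic_sup_fromEdgeSet_iff.mp ha).2 h).elim hac' hac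
  by_contra hab
  exact hab ((hb.preconnected a b).of_sup_edge hab hnac)

end SimpleGraph

open SimpleGraph

theorem MLLLink.eq_of_mem_concls_of_mem_prems {U : Type} {L : MLLLink U} {x u w : U}
    (hx : x ∈ L.prems) (hu : u ∈ L.concls) (hw : w ∈ L.concls) : u = w := by
  cases L <;> simp_all [MLLLink.prems, MLLLink.concls]

theorem switchEdge_congr {U : Type} {S S' : MLLLink U → Bool} {L : MLLLink U} {v w : U}
    (h : S L = S' L) : switchEdge S L v w ↔ switchEdge S' L v w := by
  cases L <;> simp only [switchEdge, h]

theorem mem_concls_of_switchEdge {U : Type} {S : MLLLink U → Bool} {L : MLLLink U} {v w : U}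
    (h : switchEdge S L v w) : w ∈ L.concls ∧ (v ∈ L.prems ∨ v ∈ L.concls) := by
  cases L <;>
    simp only [switchEdge, MLLLink.concls, MLLLink.prems, List.mem_cons, List.not_mem_nil,
      or_false, false_or] at h ⊢ <;>
    tauto

namespace MLLProofStructure

variable {Θ : MLLProofStructure V}

variable (Θ) in
def offLinkGraph (L : MLLLink V) (S : MLLLink V → Bool) : SimpleGraph V :=
  fromRel fun v w => ∃ L' ∈ Θ.links, L' ≠ L ∧ switchEdge S L' v w

theorem offLinkGraph_update (L : MLLLink V) (S : MLLLink V → Bool) (b : Bool) :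
    Θ.offLinkGraph L (Function.update S L b) = Θ.offLinkGraph L S := by
  simp only [offLinkGraph]
  congr
  ext v w
  exact exists_congr fun L' => and_congr_right fun _ => and_congr_right fun hne =>
    switchEdge_congr (Function.update_of_ne hne b S)

theorem belowEdges_eq {L : MLLLink V} (hL : L ∈ Θ.links) {x c : V} (hx : x ∈ L.prems)
    (hc : c ∈ L.concls) : belowEdges Θ x = {s(x, c)} := by
  ext e
  constructor
  · rintro ⟨L', hL', hx', c', hc', rfl⟩
    obtain rfl := Θ.prem_unique x L' hL' L hL hx' hx
    rw [MLLLink.eq_of_mem_concls_of_mem_prems hx hc' hc]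
    rfl
  · rintro rfl
    exact ⟨L, hL, hx, c, hc, rfl⟩

theorem eq_of_offLinkGraph_adj {L : MLLLink V} (hL : L ∈ Θ.links) {c : V} (hc : c ∈ L.concls)
    {S : MLLLink V → Bool} {x y : V} (hx : (Θ.offLinkGraph L S).Adj x c)
    (hy : (Θ.offLinkGraph L S).Adj y c) : x = y := by
  have below : ∀ {z}, (Θ.offLinkGraph L S).Adj z c →
      ∃ L' ∈ Θ.links, c ∈ L'.prems ∧ z ∈ L'.concls := by
    intro z hz
    obtain ⟨-, ⟨L', hL', hne, h⟩ | ⟨L', hL', hne, h⟩⟩ := (fromRel_adj ..).mp hz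
    · exact (hne (Θ.concl_unique c L' hL' L hL (mem_concls_of_switchEdge h).1 hc)).elim
    · obtain ⟨hz, hc' | hc'⟩ := mem_concls_of_switchEdge h
      · exact ⟨L', hL', hc', hz⟩
      · exact (hne (Θ.concl_unique c L' hL' L hL hc' hc)).elim
  obtain ⟨L₁, hL₁, hc₁, hx₁⟩ := below hx
  obtain ⟨L₂, hL₂, hc₂, hy₂⟩ := below hy
  obtain rfl := Θ.prem_unique c L₁ hL₁ L₂ hL₂ hc₁ hc₂
  exact MLLLink.eq_of_mem_concls_of_mem_prems hc₁ hx₁ hy₂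

/- `cond b A B` is the premise kept by a switching `S` with `S (par A B C) = b`; stating the
lemmas below for it treats both premises at once. -/

section ParLink

variable {A B C : V}

theorem par_ne (hL : MLLLink.par A B C ∈ Θ.links) : A ≠ B ∧ A ≠ C ∧ B ≠ C := by
  have h := Θ.nodup _ hL
  simp only [MLLLink.prems, MLLLink.concls, List.cons_append, List.nil_append, List.nodup_cons,
    List.mem_cons, List.not_mem_nil] at h
  tauto

theorem drGraph_eq_offLinkGraph_sup_edge (hL : MLLLink.par A B C ∈ Θ.links)
    (S : MLLLink V → Bool) :
    drGraph Θ S = Θ.offLinkGraph (.par A B C) S ⊔ edge (cond (S (.par A B C)) A B) C := by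
  have split : ∀ v w, drRel Θ S v w ↔ (∃ L ∈ Θ.links, L ≠ .par A B C ∧ switchEdge S L v w) ∨
      (v = cond (S (.par A B C)) A B ∧ w = C) := by
    intro v w
    constructor
    · rintro ⟨L, hL', h⟩
      by_cases hpar : L = .par A B C
      · subst hpar
        right
        cases hS : S (.par A B C) <;> simpa [switchEdge, hS] using h
      · exact .inl ⟨L, hL', hpar, h⟩
    · rintro (⟨L, hL', -, h⟩ | ⟨hv, hw⟩)
      · exact ⟨L, hL', h⟩
      · refine ⟨_, hL, ?_⟩
        cases hS : S (.par A B C) <;> simp [switchEdge, hS, hv, hw]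
  ext v w
  simp only [drGraph, offLinkGraph, fromRel_adj, sup_adj, edge_adj, split]
  grind

theorem isAcyclic_connected_sup_edge (hL : MLLLink.par A B C ∈ Θ.links) (hΘ : IsProofNet Θ)
    (S : MLLLink V → Bool) (b : Bool) :
    (Θ.offLinkGraph (.par A B C) S ⊔ edge (cond b A B) C).IsAcyclic ∧
      (Θ.offLinkGraph (.par A B C) S ⊔ edge (cond b A B) C).Connected := by
  have h := hΘ (Function.update S (.par A B C) b)
  rwa [drGraph_eq_offLinkGraph_sup_edge hL, Function.update_self, offLinkGraph_update] at h

theorem not_offLinkGraph_adj (hL : MLLLink.par A B C ∈ Θ.links) (hΘ : IsProofNet Θ)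
    (S : MLLLink V → Bool) (b : Bool) :
    ¬(Θ.offLinkGraph (.par A B C) S).Adj (cond b A B) C := by
  obtain ⟨hAB, hAC, hBC⟩ := par_ne hL
  refine not_adj_of_isAcyclic_sup_edge (isAcyclic_connected_sup_edge hL hΘ S !b).1
    (isAcyclic_connected_sup_edge hL hΘ S b).2
    (fun x y => eq_of_offLinkGraph_adj hL (by simp [MLLLink.concls])) ?_ ?_ <;>
    cases b <;> simpa [eq_comm] using ‹_›

theorem offLinkGraph_reachable (hL : MLLLink.par A B C ∈ Θ.links) (hΘ : IsProofNet Θ)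
    (S : MLLLink V → Bool) : (Θ.offLinkGraph (.par A B C) S).Reachable A B :=
  reachable_of_isAcyclic_sup_edge (isAcyclic_connected_sup_edge hL hΘ S true).1
    (isAcyclic_connected_sup_edge hL hΘ S false).2 (not_offLinkGraph_adj hL hΘ S true)
    (par_ne hL).2.1

theorem empGraph_cond_of_eq (hL : MLLLink.par A B C ∈ Θ.links) (hΘ : IsProofNet Θ)
    {S : MLLLink V → Bool} {b : Bool} (hS : S (.par A B C) = b) :
    empGraph Θ S (cond b A B) = Θ.offLinkGraph (.par A B C) S := by
  rw [empGraph, belowEdges_eq hL (c := C) (by cases b <;> simp [MLLLink.prems])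
    (by simp [MLLLink.concls]), drGraph_eq_offLinkGraph_sup_edge hL, hS]
  exact deleteEdges_sup_edge_self (not_offLinkGraph_adj hL hΘ S b)

theorem empGraph_cond_of_ne (hL : MLLLink.par A B C ∈ Θ.links) (hΘ : IsProofNet Θ)
    {S : MLLLink V → Bool} {b : Bool} (hS : S (.par A B C) ≠ b) :
    empGraph Θ S (cond b A B) = drGraph Θ S := by
  rw [empGraph, belowEdges_eq hL (c := C) (by cases b <;> simp [MLLLink.prems])
    (by simp [MLLLink.concls]), drGraph_eq_offLinkGraph_sup_edge hL]
  refine deleteEdges_sup_edge_of_ne (not_offLinkGraph_adj hL hΘ S b) ?_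
  obtain ⟨hAB, -⟩ := par_ne hL
  cases b <;> simp_all [Ne.symm hAB]

theorem empire_cond_eq_iInter (hL : MLLLink.par A B C ∈ Θ.links) (hΘ : IsProofNet Θ)
    (b : Bool) : empire Θ (cond b A B) =
      ⋂ S, {v | (Θ.offLinkGraph (.par A B C) S).Reachable (cond b A B) v} := by
  ext v
  simp only [empire, empComp, Set.mem_iInter, Set.mem_ofPred_eq]
  constructor
  · intro h S
    have hv := h (Function.update S (.par A B C) b)
    rwa [empGraph_cond_of_eq hL hΘ (Function.update_self ..), offLinkGraph_update] at hv
  · intro h S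
    by_cases hS : S (.par A B C) = b
    · rw [empGraph_cond_of_eq hL hΘ hS]
      exact h S
    · rw [empGraph_cond_of_ne hL hΘ hS]
      exact (hΘ S).2.preconnected _ v

end ParLink

end MLLProofStructure

open MLLProofStructure

/-- In an MLL proof net, the empires of the two premises of a ⅋-link coincide. -/
theorem par_empires_equal (Θ : MLLProofStructure V) (hΘ : IsProofNet Θ)
    (A B C : V) (hL : MLLLink.par A B C ∈ Θ.links) :
    empire Θ A = empire Θ B :=
  calc empire Θ A
      = ⋂ S, {v | (Θ.offLinkGraph (.par A B C) S).Reachable A v} :=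
        empire_cond_eq_iInter hL hΘ true
    _ = ⋂ S, {v | (Θ.offLinkGraph (.par A B C) S).Reachable B v} :=
        Set.iInter_congr fun S => Set.ext fun _ =>
          ⟨(offLinkGraph_reachable hL hΘ S).symm.trans, (offLinkGraph_reachable hL hΘ S).trans⟩
    _ = empire Θ B := (empire_cond_eq_iInter hL hΘ false).symm
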